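/- Consider the planar system ẋ = y^{2l−1} − x^{2k+1}, ẏ = −x + m·y^{2s+1} with positive integers l, k, s satisfying 2 ≤ l ≤ 2s and with s < kl. If m ≤ 0, then the origin is an attractor; if m > 0, then the origin is a repeller. -/

import Mathlib

open Filter Topology Set

/-- A forward solution of the system ẋ = y^{2l-1} - x^{2k+1}, ẏ = -x + m·y^{2s+1},
defined (in the forward sense) on [0,∞). -/
def IsForwardSolution (l k s : ℕ) (m : ℝ) (x y : ℝ → ℝ) : Prop :=
  ∀ t : ℝ, 0 ≤ t →
    HasDerivWithinAt x (y t ^ (2 * l - 1) - x t ^ (2 * k + 1)) (Ici 0) t ∧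
    HasDerivWithinAt y (-x t + m * y t ^ (2 * s + 1)) (Ici 0) t

/-- A backward solution of the same system, defined on (-∞,0]. -/
def IsBackwardSolution (l k s : ℕ) (m : ℝ) (x y : ℝ → ℝ) : Prop :=
  ∀ t : ℝ, t ≤ 0 →
    HasDerivWithinAt x (y t ^ (2 * l - 1) - x t ^ (2 * k + 1)) (Iic 0) t ∧
    HasDerivWithinAt y (-x t + m * y t ^ (2 * s + 1)) (Iic 0) t

/-- The origin is an attractor: all forward solutions starting close enough to the
origin tend to the origin as t → +∞. -/
def OriginAttractor (l k s : ℕ) (m : ℝ) : Prop :=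
  ∃ δ : ℝ, 0 < δ ∧ ∀ x y : ℝ → ℝ, IsForwardSolution l k s m x y →
    x 0 ^ 2 + y 0 ^ 2 < δ ^ 2 →
    Tendsto (fun t => (x t, y t)) atTop (𝓝 (0, 0))

/-- The origin is a repeller: all backward solutions starting close enough to the
origin tend to the origin as t → -∞. -/
def OriginRepeller (l k s : ℕ) (m : ℝ) : Prop :=
  ∃ δ : ℝ, 0 < δ ∧ ∀ x y : ℝ → ℝ, IsBackwardSolution l k s m x y →
    x 0 ^ 2 + y 0 ^ 2 < δ ^ 2 →
    Tendsto (fun t => (x t, y t)) atBot (𝓝 (0, 0))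

/-!
Near the origin the Hamiltonian `H = x²/2 + y^(2l)/(2l)` of the conservative part is corrected
by a small cross term, `-x y^(2kl+3)` for `m ≤ 0` and, in reversed time, `-2 x^(2k+1) y` for
`m > 0`, so that its derivative along the flow is at most `-ρ (x^A + y^B)` for suitable even
`A, B`. Every other term of that derivative is a monomial `x^p y^q` with `p/A + q/B > 1`, hence
negligible near the origin by a weighted Young inequality; this is where `s < kl` and `l ≤ 2s`
enter. The corrected function is comparable to `x² + y^(2l)`, and a Lyapunov function that is
comparable to a gauge and decays at least like a power of it traps every nearby trajectory and
drives it to the origin.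
-/

open Asymptotics

def absPowSum (p q : ℕ) (z : ℝ × ℝ) : ℝ := |z.1| ^ p + |z.2| ^ q

lemma absPowSum_nonneg (p q : ℕ) (z : ℝ × ℝ) : 0 ≤ absPowSum p q z := by
  unfold absPowSum; positivity

lemma continuous_absPowSum (p q : ℕ) : Continuous (absPowSum p q) := by
  unfold absPowSum; fun_prop

lemma tendsto_nhds_zero_of_abs_pow {α : Type*} {F : Filter α} {f : α → ℝ} {n : ℕ}
    (hn : n ≠ 0) (h : Tendsto (fun a => |f a| ^ n) F (𝓝 0)) : Tendsto f F (𝓝 0) := by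
  rw [Metric.tendsto_nhds] at h ⊢
  intro ε hε
  filter_upwards [h (ε ^ n) (by positivity)] with a ha
  rw [Real.dist_0_eq_abs, abs_of_nonneg (by positivity)] at ha
  rw [Real.dist_0_eq_abs]
  exact (pow_lt_pow_iff_left₀ (abs_nonneg _) hε.le hn).1 ha

lemma comap_absPowSum_nhds_zero {p q : ℕ} (hp : p ≠ 0) (hq : q ≠ 0) :
    comap (absPowSum p q) (𝓝 0) = 𝓝 0 := by
  refine le_antisymm ?_ ?_
  · have hN : Tendsto (absPowSum p q) (comap (absPowSum p q) (𝓝 0)) (𝓝 0) := tendsto_comap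
    have h1 := tendsto_nhds_zero_of_abs_pow hp <| squeeze_zero (fun _ => by positivity)
      (fun z => le_add_of_nonneg_right (by positivity)) hN
    have h2 := tendsto_nhds_zero_of_abs_pow hq <| squeeze_zero (fun _ => by positivity)
      (fun z => le_add_of_nonneg_left (by positivity)) hN
    exact h1.prodMk_nhds h2
  · refine ((continuous_absPowSum p q).tendsto' 0 0 ?_).le_comap
    simp [absPowSum, hp, hq]

/-- The hypothesis is `p / A + q / B > 1`, as in the weighted Young inequality. -/
lemma isLittleO_monomial_absPowSum {A B p q : ℕ} (hA : A ≠ 0) (hB : B ≠ 0)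
    (h : A * B < p * B + q * A) :
    (fun z : ℝ × ℝ => z.1 ^ p * z.2 ^ q) =o[𝓝 0] absPowSum A B := by
  refine IsLittleO.of_bound fun c hc => ?_
  have hS : Tendsto (absPowSum A B) (𝓝 0) (𝓝 0) :=
    (continuous_absPowSum A B).tendsto' 0 0 (by simp [absPowSum, hA, hB])
  filter_upwards [hS.eventually (eventually_le_nhds (lt_min one_pos (pow_pos hc (A * B))))]
    with z hz
  set S := absPowSum A B z
  have hS0 : 0 ≤ S := absPowSum_nonneg A B z
  have hu : |z.1| ^ A ≤ S := le_add_of_nonneg_right (by positivity)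
  have hv : |z.2| ^ B ≤ S := le_add_of_nonneg_left (by positivity)
  have hAB : A * B ≠ 0 := mul_ne_zero hA hB
  rw [norm_mul, norm_pow, norm_pow, Real.norm_eq_abs, Real.norm_eq_abs, Real.norm_eq_abs,
    abs_of_nonneg hS0, ← pow_le_pow_iff_left₀ (by positivity) (by positivity) hAB]
  calc (|z.1| ^ p * |z.2| ^ q) ^ (A * B) = (|z.1| ^ A) ^ (p * B) * (|z.2| ^ B) ^ (q * A) := by
        ring
    _ ≤ S ^ (p * B) * S ^ (q * A) := by gcongr
    _ = S ^ (p * B + q * A) := (pow_add S _ _).symm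
    _ ≤ S ^ (A * B + 1) := pow_le_pow_of_le_one hS0 (hz.trans (min_le_left _ _)) h
    _ = S ^ (A * B) * S := pow_succ S _
    _ ≤ S ^ (A * B) * c ^ (A * B) := by gcongr; exact hz.trans (min_le_right _ _)
    _ = (c * S) ^ (A * B) := by ring

lemma absPowSum_pow_le {p q A B γ : ℕ} (hA : A ≤ p * γ) (hB : B ≤ q * γ) {z : ℝ × ℝ}
    (h1 : |z.1| ≤ 1) (h2 : |z.2| ≤ 1) :
    absPowSum p q z ^ γ ≤ 2 ^ (γ - 1) * absPowSum A B z := by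
  calc absPowSum p q z ^ γ ≤ 2 ^ (γ - 1) * ((|z.1| ^ p) ^ γ + (|z.2| ^ q) ^ γ) :=
        add_pow_le (by positivity) (by positivity) γ
    _ ≤ 2 ^ (γ - 1) * absPowSum A B z := by
        rw [← pow_mul, ← pow_mul, absPowSum]
        gcongr ?_ * (?_ + ?_)
        · exact pow_le_pow_of_le_one (abs_nonneg _) h1 hA
        · exact pow_le_pow_of_le_one (abs_nonneg _) h2 hB

lemma sub_le_mul_sub_of_hasDerivWithinAt_Ici {W W' : ℝ → ℝ} {C a b : ℝ} (ha : 0 ≤ a)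
    (hab : a ≤ b) (hW : ∀ t, 0 ≤ t → HasDerivWithinAt W (W' t) (Ici 0) t)
    (hC : ∀ t ∈ Ioo a b, W' t ≤ C) :
    W b - W a ≤ C * (b - a) := by
  have hderiv : ∀ t ∈ Ioo a b, HasDerivAt W (W' t) t := fun t ht =>
    (hW t (ha.trans ht.1.le)).hasDerivAt (Ici_mem_nhds (ha.trans_lt ht.1))
  refine (convex_Icc a b).image_sub_le_mul_sub_of_deriv_le
    (fun t ht => (hW t (ha.trans ht.1)).continuousWithinAt.mono fun τ hτ => ha.trans hτ.1)
    ?_ ?_ a (left_mem_Icc.2 hab) b (right_mem_Icc.2 hab) hab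
  · rw [interior_Icc]
    exact fun t ht => (hderiv t ht).differentiableAt.differentiableWithinAt
  · rw [interior_Icc]
    exact fun t ht => (hderiv t ht).deriv ▸ hC t ht

section Lyapunov

variable {N W W' : ℝ → ℝ} {r c κ : ℝ} {γ : ℕ}

/-- At a first exit time `t₁`, `c * r ≤ c * N t₁ ≤ W t₁ ≤ W 0 ≤ N 0 < c * r`. -/
lemma lt_of_lyapunov (hc : 0 ≤ c) (hκ : 0 ≤ κ) (hN0 : ∀ t, 0 ≤ N t)
    (hNc : ContinuousOn N (Ici 0))
    (hW : ∀ t, 0 ≤ t → HasDerivWithinAt W (W' t) (Ici 0) t)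
    (hreg : ∀ t, 0 ≤ t → N t ≤ r →
      c * N t ≤ W t ∧ W t ≤ N t ∧ W' t ≤ -κ * N t ^ γ)
    (h0 : N 0 < r) (h0' : N 0 < c * r) {t : ℝ} (ht : 0 ≤ t) : N t < r := by
  by_contra! hrt
  set S := Ici (0 : ℝ) ∩ N ⁻¹' Ici r
  have hbdd : BddBelow S := ⟨0, fun _ h => h.1⟩
  have hexit : sInf S ∈ S :=
    (hNc.preimage_isClosed_of_isClosed isClosed_Ici isClosed_Ici).csInf_mem ⟨t, ht, hrt⟩ hbdd
  set t₁ := sInf S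
  have hbefore : ∀ τ ∈ Ico 0 t₁, N τ < r := fun τ hτ =>
    lt_of_not_ge fun h => (csInf_le hbdd ⟨hτ.1, h⟩).not_gt hτ.2
  have ht₁ : 0 < t₁ := by
    refine hexit.1.lt_of_ne fun h => ?_
    rw [← h] at hexit
    exact (not_le.2 h0) hexit.2
  have hNt₁ : N t₁ ≤ r := by
    have hcl : t₁ ∈ closure (Ico 0 t₁) := by
      rw [closure_Ico ht₁.ne]
      exact right_mem_Icc.2 ht₁.le
    exact ContinuousWithinAt.closure_le hcl ((hNc t₁ hexit.1).mono fun τ hτ => hτ.1)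
      continuousWithinAt_const fun τ hτ => (hbefore τ hτ).le
  have hWdecr : W t₁ - W 0 ≤ 0 * (t₁ - 0) :=
    sub_le_mul_sub_of_hasDerivWithinAt_Ici le_rfl ht₁.le hW fun τ hτ => by
      have := (hreg τ hτ.1.le (hbefore τ ⟨hτ.1.le, hτ.2⟩).le).2.2
      have : 0 ≤ κ * N τ ^ γ := mul_nonneg hκ (pow_nonneg (hN0 τ) γ)
      linarith
  have h₁ := (hreg t₁ hexit.1 hNt₁).1
  have h₀ := (hreg 0 le_rfl h0.le).2.1
  have : c * r ≤ c * N t₁ := mul_le_mul_of_nonneg_left hexit.2 hc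
  linarith

theorem tendsto_zero_of_lyapunov (hc : 0 < c) (hκ : 0 < κ) (hN0 : ∀ t, 0 ≤ N t)
    (hNc : ContinuousOn N (Ici 0)) (hW : ∀ t, 0 ≤ t → HasDerivWithinAt W (W' t) (Ici 0) t)
    (hreg : ∀ t, 0 ≤ t → N t ≤ r →
      c * N t ≤ W t ∧ W t ≤ N t ∧ W' t ≤ -κ * N t ^ γ)
    (h0 : N 0 < r) (h0' : N 0 < c * r) : Tendsto N atTop (𝓝 0) := by
  have hreg' : ∀ t, 0 ≤ t → c * N t ≤ W t ∧ W t ≤ N t ∧ W' t ≤ -κ * N t ^ γ :=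
    fun t ht => hreg t ht (lt_of_lyapunov hc.le hκ.le hN0 hNc hW hreg h0 h0' ht).le
  have hsmall : ∀ μ > 0, ∃ T ≥ 0, W T < μ := by
    intro μ hμ
    by_contra! hbig
    -- while `W ≥ μ`, also `N ≥ μ`, so `W` decreases at a definite rate
    set a := κ * μ ^ γ
    have ha : 0 < a := by positivity
    have hslope : ∀ T ≥ 0, W T - W 0 ≤ -a * (T - 0) := fun T hT =>
      sub_le_mul_sub_of_hasDerivWithinAt_Ici le_rfl hT hW fun τ hτ => by
        obtain ⟨-, hWN, hW'⟩ := hreg' τ hτ.1.le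
        have : μ ^ γ ≤ N τ ^ γ := pow_le_pow_left₀ hμ.le ((hbig τ hτ.1.le).trans hWN) γ
        nlinarith
    have hT : 0 ≤ W 0 / a := div_nonneg (hμ.le.trans (hbig 0 le_rfl)) ha.le
    have := hslope (W 0 / a) hT
    rw [sub_zero, neg_mul, mul_div_cancel₀ _ ha.ne'] at this
    linarith [hbig (W 0 / a) hT]
  rw [Metric.tendsto_atTop]
  intro ε hε
  obtain ⟨T, hT, hWT⟩ := hsmall (c * ε) (by positivity)
  refine ⟨T, fun t ht => ?_⟩
  have hWt : W t - W T ≤ 0 * (t - T) :=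
    sub_le_mul_sub_of_hasDerivWithinAt_Ici hT ht hW fun τ hτ => by
      have := (hreg' τ (hT.trans hτ.1.le)).2.2
      have : 0 ≤ κ * N τ ^ γ := mul_nonneg hκ.le (pow_nonneg (hN0 τ) γ)
      linarith
  rw [Real.dist_0_eq_abs, abs_of_nonneg (hN0 t)]
  have := (hreg' t (hT.trans ht)).1
  exact lt_of_mul_lt_mul_left (by linarith) hc.le

end Lyapunov

theorem exists_mem_nhds_tendsto_of_lyapunov {E : Type*} [TopologicalSpace E] {e : E}
    {N V V' : E → ℝ} {c κ : ℝ} {γ : ℕ} (hNc : Continuous N) (hN0 : ∀ z, 0 ≤ N z)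
    (hN : comap N (𝓝 0) = 𝓝 e) (hc : 0 < c) (hκ : 0 < κ)
    (hV : ∀ᶠ z in 𝓝 e, c * N z ≤ V z ∧ V z ≤ N z ∧ V' z ≤ -κ * N z ^ γ) :
    ∃ U ∈ 𝓝 e, ∀ z : ℝ → E, ContinuousOn z (Ici 0) →
      (∀ t, 0 ≤ t → HasDerivWithinAt (fun t => V (z t)) (V' (z t)) (Ici 0) t) →
      z 0 ∈ U → Tendsto z atTop (𝓝 e) := by
  rw [← hN] at hV ⊢
  obtain ⟨Ω, hΩ, hΩV⟩ := mem_comap.1 hV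
  obtain ⟨r, hr, hball⟩ := Metric.mem_nhds_iff.1 hΩ
  have hreg : ∀ z, N z ≤ r / 2 →
      c * N z ≤ V z ∧ V z ≤ N z ∧ V' z ≤ -κ * N z ^ γ :=
    fun z hz => hΩV <| hball <| by
      rw [Metric.mem_ball, Real.dist_0_eq_abs, abs_of_nonneg (hN0 z)]
      linarith
  refine ⟨N ⁻¹' Iio (min (r / 2) (c * (r / 2))),
    preimage_mem_comap (Iio_mem_nhds (by positivity)), fun z hz hzV hz0 => ?_⟩
  rw [tendsto_comap_iff]
  exact tendsto_zero_of_lyapunov hc hκ (fun t => hN0 _) (hNc.comp_continuousOn hz) hzV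
    (fun t _ ht => hreg _ ht) (hz0.trans_le (min_le_left _ _)) (hz0.trans_le (min_le_right _ _))

/-- The first integral of the conservative part `ẋ = y^(2l-1)`, `ẏ = -x` of the system. -/
noncomputable def hamiltonian (l : ℕ) (z : ℝ × ℝ) : ℝ :=
  z.1 ^ 2 / 2 + z.2 ^ (2 * l) / (2 * l)

lemma eventually_hamiltonian_add_mem_Icc {l : ℕ} (hl : l ≠ 0) {φ : ℝ × ℝ → ℝ}
    (hφ : φ =o[𝓝 0] absPowSum 2 (2 * l)) :
    ∀ᶠ z in 𝓝 0, (4 * l : ℝ)⁻¹ * absPowSum 2 (2 * l) z ≤ hamiltonian l z + φ z ∧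
      hamiltonian l z + φ z ≤ absPowSum 2 (2 * l) z := by
  have hL : (1 : ℝ) ≤ l := Nat.one_le_cast.2 (Nat.one_le_iff_ne_zero.2 hl)
  filter_upwards [hφ.bound (inv_pos.2 (by positivity : (0 : ℝ) < 4 * l))] with z hz
  rw [Real.norm_eq_abs, Real.norm_of_nonneg (absPowSum_nonneg _ _ z)] at hz
  have hH : hamiltonian l z = |z.1| ^ 2 / 2 + |z.2| ^ (2 * l) / (2 * l) := by
    rw [hamiltonian, sq_abs, (even_two_mul l).pow_abs]
  rw [hH]
  unfold absPowSum at hz ⊢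
  set a := |z.1| ^ 2
  set b := |z.2| ^ (2 * l)
  have ha : 0 ≤ a := by positivity
  have hb : 0 ≤ b := by positivity
  have hlow : (a + b) / (2 * l) ≤ a / 2 + b / (2 * l) := by
    rw [add_div]; gcongr; linarith
  have hup : a / 2 + b / (2 * l) ≤ (a + b) / 2 := by
    rw [add_div]; gcongr; linarith
  have hφN : (4 * l : ℝ)⁻¹ * (a + b) ≤ (a + b) / 2 := by
    rw [div_eq_inv_mul]
    gcongr
    linarith
  have h4 : (4 * l : ℝ)⁻¹ * (a + b) = (a + b) / (2 * l) / 2 := by field_simp; ring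
  constructor
  · linarith [neg_abs_le (φ z)]
  · linarith [le_abs_self (φ z)]

theorem exists_basin_of_lyapunov {l A B : ℕ} (hl : l ≠ 0) {V V' : ℝ × ℝ → ℝ} {ρ : ℝ}
    (hρ : 0 < ρ) (hV : (fun z => V z - hamiltonian l z) =o[𝓝 0] absPowSum 2 (2 * l))
    (hV' : ∀ᶠ z in 𝓝 0, V' z ≤ -ρ * absPowSum A B z) :
    ∃ δ > 0, ∀ x y : ℝ → ℝ, ContinuousOn x (Ici 0) → ContinuousOn y (Ici 0) →
      (∀ t, 0 ≤ t → HasDerivWithinAt (fun t => V (x t, y t)) (V' (x t, y t)) (Ici 0) t) →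
      x 0 ^ 2 + y 0 ^ 2 < δ ^ 2 → Tendsto (fun t => (x t, y t)) atTop (𝓝 0) := by
  set γ := A + B
  have hsmall : ∀ᶠ z : ℝ × ℝ in 𝓝 0, |z.1| ≤ 1 ∧ |z.2| ≤ 1 := by
    filter_upwards [Metric.ball_mem_nhds (0 : ℝ × ℝ) one_pos] with z hz
    rw [← ball_prod_same] at hz
    simp only [mem_prod, Metric.mem_ball, Prod.fst_zero, Prod.snd_zero, Real.dist_0_eq_abs] at hz
    exact ⟨hz.1.le, hz.2.le⟩
  have hbound : ∀ᶠ z in 𝓝 0, (4 * l : ℝ)⁻¹ * absPowSum 2 (2 * l) z ≤ V z ∧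
      V z ≤ absPowSum 2 (2 * l) z ∧
      V' z ≤ -(ρ / 2 ^ (γ - 1)) * absPowSum 2 (2 * l) z ^ γ := by
    filter_upwards [eventually_hamiltonian_add_mem_Icc hl hV, hV', hsmall] with z hVz hV'z hz
    simp only [add_sub_cancel] at hVz
    refine ⟨hVz.1, hVz.2, hV'z.trans ?_⟩
    have := absPowSum_pow_le (p := 2) (q := 2 * l) (A := A) (B := B) (γ := γ) (by omega)
      ((by omega : B ≤ γ).trans (Nat.le_mul_of_pos_left γ (by omega))) hz.1 hz.2
    rw [neg_mul, neg_mul, neg_le_neg_iff, div_mul_eq_mul_div, div_le_iff₀ (by positivity)]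
    nlinarith
  obtain ⟨U, hU, hbasin⟩ := exists_mem_nhds_tendsto_of_lyapunov (continuous_absPowSum _ _)
    (absPowSum_nonneg _ _) (comap_absPowSum_nhds_zero two_ne_zero (by omega))
    (by positivity) (by positivity) hbound
  obtain ⟨δ, hδ, hball⟩ := Metric.mem_nhds_iff.1 hU
  refine ⟨δ, hδ, fun x y hx hy hxy h0 => hbasin _ (hx.prodMk hy) hxy (hball ?_)⟩
  rw [← ball_prod_same]
  simp only [mem_prod, Metric.mem_ball, Prod.fst_zero, Prod.snd_zero, Real.dist_0_eq_abs]
  exact ⟨abs_lt_of_sq_lt_sq (by nlinarith) hδ.le, abs_lt_of_sq_lt_sq (by nlinarith) hδ.le⟩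

section Attractor

variable (l k s : ℕ) (m : ℝ)

noncomputable def attractorLyapunov (z : ℝ × ℝ) : ℝ :=
  hamiltonian l z - z.1 * z.2 ^ (2 * k * l + 3)

/-- The derivative of `attractorLyapunov` along the flow, expanded; its last summand (like that
of `repellerLyapunovDeriv`) collects the monomials that are negligible near the origin. -/
def attractorLyapunovDeriv (z : ℝ × ℝ) : ℝ :=
  -(z.1 ^ (2 * k + 2) + z.2 ^ (2 * l + 2 * k * l + 2)) + m * z.2 ^ (2 * l + 2 * s) +
    (z.1 ^ (2 * k + 1) * z.2 ^ (2 * k * l + 3) + (2 * k * l + 3) * (z.1 ^ 2 * z.2 ^ (2 * k * l + 2))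
      - (2 * k * l + 3) * m * (z.1 ^ 1 * z.2 ^ (2 * s + 2 * k * l + 3)))

variable {l k s m}

lemma hasDerivWithinAt_attractorLyapunov {x y : ℝ → ℝ} {S : Set ℝ} {t : ℝ} (hl : l ≠ 0)
    (hx : HasDerivWithinAt x (y t ^ (2 * l - 1) - x t ^ (2 * k + 1)) S t)
    (hy : HasDerivWithinAt y (-x t + m * y t ^ (2 * s + 1)) S t) :
    HasDerivWithinAt (fun t => attractorLyapunov l k (x t, y t))
      (attractorLyapunovDeriv l k s m (x t, y t)) S t := by
  have := (((hx.pow 2).div_const 2).add ((hy.pow (2 * l)).div_const (2 * l : ℝ))).sub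
    (hx.mul (hy.pow (2 * k * l + 3)))
  refine this.congr_deriv ?_
  obtain ⟨n, rfl⟩ := Nat.exists_eq_add_one_of_ne_zero hl
  rw [attractorLyapunovDeriv, show 2 * (n + 1) - 1 = 2 * n + 1 by omega,
    show 2 * k * (n + 1) + 3 - 1 = 2 * k * (n + 1) + 2 by omega, Pi.pow_apply]
  push_cast
  field_simp
  ring

lemma isLittleO_attractorLyapunov_sub_hamiltonian (hl : l ≠ 0) (hk : k ≠ 0) :
    (fun z => attractorLyapunov l k z - hamiltonian l z) =o[𝓝 0] absPowSum 2 (2 * l) := by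
  have hkl : l ≤ k * l := Nat.le_mul_of_pos_left l (Nat.pos_of_ne_zero hk)
  have := (isLittleO_monomial_absPowSum (B := 2 * l) (p := 1) (q := 2 * k * l + 3) two_ne_zero
    (by omega) (by nlinarith)).neg_left
  simpa [attractorLyapunov] using this

lemma eventually_attractorLyapunovDeriv_le (hk : k ≠ 0) (hls : l ≤ 2 * s) (hm : m ≤ 0) :
    ∀ᶠ z in 𝓝 0, attractorLyapunovDeriv l k s m z ≤
      -(1 / 2) * absPowSum (2 * k + 2) (2 * l + 2 * k * l + 2) z := by
  have hA : 2 * k + 2 ≠ 0 := by omega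
  have hB : 2 * l + 2 * k * l + 2 ≠ 0 := by omega
  have hkl : l ≤ k * l := Nat.le_mul_of_pos_left l (Nat.pos_of_ne_zero hk)
  have hR := ((isLittleO_monomial_absPowSum (p := 2 * k + 1) (q := 2 * k * l + 3) hA hB
    (by nlinarith)).add
    ((isLittleO_monomial_absPowSum (p := 2) (q := 2 * k * l + 2) hA hB
      (by nlinarith)).const_mul_left (2 * k * l + 3 : ℝ))).sub
    ((isLittleO_monomial_absPowSum (p := 1) (q := 2 * s + 2 * k * l + 3) hA hB
      (by nlinarith)).const_mul_left ((2 * k * l + 3) * m))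
  filter_upwards [hR.bound (by norm_num : (0 : ℝ) < 1 / 2)] with z hz
  rw [Real.norm_eq_abs, Real.norm_of_nonneg (absPowSum_nonneg _ _ z)] at hz
  have hD : absPowSum (2 * k + 2) (2 * l + 2 * k * l + 2) z =
      z.1 ^ (2 * k + 2) + z.2 ^ (2 * l + 2 * k * l + 2) := by
    rw [absPowSum, Even.pow_abs ⟨k + 1, by ring⟩, Even.pow_abs ⟨l + k * l + 1, by ring⟩]
  have hmv : m * z.2 ^ (2 * l + 2 * s) ≤ 0 :=
    mul_nonpos_of_nonpos_of_nonneg hm (Even.pow_nonneg ⟨l + s, by ring⟩ _)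
  rw [attractorLyapunovDeriv, hD]
  rw [hD] at hz
  linarith [(abs_le.1 hz).2]

end Attractor

section Repeller

variable (l k s : ℕ) (m : ℝ)

noncomputable def repellerLyapunov (z : ℝ × ℝ) : ℝ :=
  hamiltonian l z - 2 * (z.1 ^ (2 * k + 1) * z.2 ^ 1)

def repellerLyapunovDeriv (z : ℝ × ℝ) : ℝ :=
  -(z.1 ^ (2 * k + 2) + m * z.2 ^ (2 * l + 2 * s)) +
    (2 * (2 * k + 1) * (z.1 ^ (2 * k) * z.2 ^ (2 * l))
      - 2 * (2 * k + 1) * (z.1 ^ (4 * k + 1) * z.2 ^ 1)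
      + 2 * m * (z.1 ^ (2 * k + 1) * z.2 ^ (2 * s + 1)))

variable {l k s m}

lemma hasDerivWithinAt_repellerLyapunov {x y : ℝ → ℝ} {S : Set ℝ} {t : ℝ} (hl : l ≠ 0)
    (hx : HasDerivWithinAt x (x t ^ (2 * k + 1) - y t ^ (2 * l - 1)) S t)
    (hy : HasDerivWithinAt y (x t - m * y t ^ (2 * s + 1)) S t) :
    HasDerivWithinAt (fun t => repellerLyapunov l k (x t, y t))
      (repellerLyapunovDeriv l k s m (x t, y t)) S t := by
  have := (((hx.pow 2).div_const 2).add ((hy.pow (2 * l)).div_const (2 * l : ℝ))).sub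
    (((hx.pow (2 * k + 1)).mul (hy.pow 1)).const_mul 2)
  refine this.congr_deriv ?_
  obtain ⟨n, rfl⟩ := Nat.exists_eq_add_one_of_ne_zero hl
  rw [repellerLyapunovDeriv, show 2 * (n + 1) - 1 = 2 * n + 1 by omega,
    show 2 * k + 1 - 1 = 2 * k by omega, Pi.pow_apply, Pi.pow_apply]
  push_cast
  field_simp
  ring

lemma isLittleO_repellerLyapunov_sub_hamiltonian (hl : l ≠ 0) (hk : k ≠ 0) :
    (fun z => repellerLyapunov l k z - hamiltonian l z) =o[𝓝 0] absPowSum 2 (2 * l) := by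
  have hkl : l ≤ k * l := Nat.le_mul_of_pos_left l (Nat.pos_of_ne_zero hk)
  have := ((isLittleO_monomial_absPowSum (B := 2 * l) (p := 2 * k + 1) (q := 1) two_ne_zero
    (by omega) (by nlinarith)).const_mul_left 2).neg_left
  simpa [repellerLyapunov] using this

lemma eventually_repellerLyapunovDeriv_le (hk : k ≠ 0) (hls : l ≤ 2 * s) (hskl : s < k * l)
    (hm : 0 < m) :
    ∀ᶠ z in 𝓝 0, repellerLyapunovDeriv l k s m z ≤
      -(min 1 m / 2) * absPowSum (2 * k + 2) (2 * l + 2 * s) z := by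
  have hA : 2 * k + 2 ≠ 0 := by omega
  have hl : l ≠ 0 := by rintro rfl; simp at hskl
  have hB : 2 * l + 2 * s ≠ 0 := by omega
  have hks : s ≤ k * s := Nat.le_mul_of_pos_left s (Nat.pos_of_ne_zero hk)
  have hR := (((isLittleO_monomial_absPowSum (p := 2 * k) (q := 2 * l) hA hB
    (by nlinarith)).const_mul_left (2 * (2 * k + 1) : ℝ)).sub
    ((isLittleO_monomial_absPowSum (p := 4 * k + 1) (q := 1) hA hB
      (by nlinarith)).const_mul_left (2 * (2 * k + 1) : ℝ))).add
    ((isLittleO_monomial_absPowSum (p := 2 * k + 1) (q := 2 * s + 1) hA hB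
      (by nlinarith)).const_mul_left (2 * m))
  filter_upwards [hR.bound (by positivity : 0 < min 1 m / 2)] with z hz
  rw [Real.norm_eq_abs, Real.norm_of_nonneg (absPowSum_nonneg _ _ z)] at hz
  have hu : 0 ≤ z.1 ^ (2 * k + 2) := Even.pow_nonneg ⟨k + 1, by ring⟩ _
  have hv : 0 ≤ z.2 ^ (2 * l + 2 * s) := Even.pow_nonneg ⟨l + s, by ring⟩ _
  have hD : absPowSum (2 * k + 2) (2 * l + 2 * s) z =
      z.1 ^ (2 * k + 2) + z.2 ^ (2 * l + 2 * s) := by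
    rw [absPowSum, Even.pow_abs ⟨k + 1, by ring⟩, Even.pow_abs ⟨l + s, by ring⟩]
  rw [repellerLyapunovDeriv, hD]
  rw [hD] at hz
  have h1 := mul_le_mul_of_nonneg_right (min_le_left 1 m) hu
  have h2 := mul_le_mul_of_nonneg_right (min_le_right 1 m) hv
  linarith [(abs_le.1 hz).2]

end Repeller

lemma HasDerivWithinAt.comp_neg_Ici {f : ℝ → ℝ} {f' t : ℝ}
    (h : HasDerivWithinAt f f' (Iic 0) (-t)) :
    HasDerivWithinAt (fun τ => f (-τ)) (-f') (Ici 0) t := by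
  rw [← mul_neg_one]
  exact h.comp t (hasDerivAt_neg t).hasDerivWithinAt fun τ (hτ : 0 ≤ τ) =>
    show -τ ≤ 0 from neg_nonpos.2 hτ

section Origin

variable {l k s : ℕ} {m : ℝ}

theorem originAttractor_of_nonpos (hl : l ≠ 0) (hk : k ≠ 0) (hls : l ≤ 2 * s) (hm : m ≤ 0) :
    OriginAttractor l k s m := by
  obtain ⟨δ, hδ, hbasin⟩ := exists_basin_of_lyapunov hl (by norm_num : (0 : ℝ) < 1 / 2)
    (isLittleO_attractorLyapunov_sub_hamiltonian hl hk)
    (eventually_attractorLyapunovDeriv_le hk hls hm)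
  refine ⟨δ, hδ, fun x y hxy h0 => hbasin x y (fun t ht => (hxy t ht).1.continuousWithinAt)
    (fun t ht => (hxy t ht).2.continuousWithinAt) (fun t ht => ?_) h0⟩
  exact hasDerivWithinAt_attractorLyapunov hl (hxy t ht).1 (hxy t ht).2

theorem originRepeller_of_pos (hl : l ≠ 0) (hk : k ≠ 0) (hls : l ≤ 2 * s) (hskl : s < k * l)
    (hm : 0 < m) : OriginRepeller l k s m := by
  obtain ⟨δ, hδ, hbasin⟩ := exists_basin_of_lyapunov hl (by positivity : 0 < min 1 m / 2)
    (isLittleO_repellerLyapunov_sub_hamiltonian hl hk)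
    (eventually_repellerLyapunovDeriv_le hk hls hskl hm)
  refine ⟨δ, hδ, fun x y hxy h0 => ?_⟩
  have hrev : ∀ t, 0 ≤ t →
      HasDerivWithinAt (fun τ => x (-τ))
        (x (-t) ^ (2 * k + 1) - y (-t) ^ (2 * l - 1)) (Ici 0) t ∧
      HasDerivWithinAt (fun τ => y (-τ)) (x (-t) - m * y (-t) ^ (2 * s + 1)) (Ici 0) t := by
    intro t ht
    obtain ⟨hx, hy⟩ := hxy (-t) (neg_nonpos.2 ht)
    exact ⟨by simpa using hx.comp_neg_Ici, by simpa [neg_add_eq_sub] using hy.comp_neg_Ici⟩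
  have := hbasin _ _ (fun t ht => (hrev t ht).1.continuousWithinAt)
    (fun t ht => (hrev t ht).2.continuousWithinAt)
    (fun t ht => hasDerivWithinAt_repellerLyapunov hl (hrev t ht).1 (hrev t ht).2)
    (by simpa using h0)
  have hback := this.comp tendsto_neg_atBot_atTop
  simp only [Function.comp_def, neg_neg] at hback
  exact hback

end Origin

theorem origin_stability_s_lt_kl (l k s : ℕ) (hl : 2 ≤ l) (hk : 1 ≤ k)
    (hls : l ≤ 2 * s) (hskl : s < k * l) (m : ℝ) :
    (m ≤ 0 → OriginAttractor l k s m) ∧ (0 < m → OriginRepeller l k s m) :=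
  ⟨originAttractor_of_nonpos (by omega) (by omega) hls,
    originRepeller_of_pos (by omega) (by omega) hls hskl⟩
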